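/- Let 1 ≤ N < n, set ε = 1, and let i ∈ {N+1,…,n}. Then the quantity E_i(L^{n,−N,0})[q] + ½ (q_{n+N+1−i})_{xx} depends only on q_1,…,q_{n+N−i} and their x-derivatives: for any two smooth curves q, q̃ : ℝ → ℝ^n with q_l = q̃_l for all l = 1,…,n+N−i, one has E_i(L^{n,−N,0})[q] + ½ (q_{n+N+1−i})_{xx} = E_i(L^{n,−N,0})[q̃] + ½ (q̃_{n+N+1−i})_{xx} pointwise. In other words, the Euler–Lagrange equation E_i(L^{n,−N,0}) = 0 has the form −½ (q_{n+N+1−i})_{xx} + φ_{n+N+1−i−N}[q_1,…,q_{n+N−i}] = 0. -/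

import Mathlib

noncomputable section

/-- Benenti potentials `V_i^{(k)}` for `k ≥ 0`: `Vpos n q k i = V_i^{(k)}(q)` (`i` 1-based),
with `V_i^{(0)} = δ_{i n}` and `V_i^{(k+1)} = V_{i+1}^{(k)} - q_i V_1^{(k)}`, `V_{n+1}^{(k)} := 0`. -/
def Vpos (n : ℕ) (q : ℕ → ℝ) : ℕ → ℕ → ℝ
  | 0, i => if i = n then 1 else 0
  | k + 1, i => (if i = n then 0 else Vpos n q k (i + 1)) - q i * Vpos n q k 1

/-- Benenti potentials for negative superscripts: `Vneg n q j r = V_r^{(-j)}(q)`, via the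
backward recursion `V_r^{(k)} = V_{r-1}^{(k+1)} - (q_{r-1}/q_n) V_n^{(k+1)}`, with
`V_0 := 0` and `q_0 := 1`. -/
def Vneg (n : ℕ) (q : ℕ → ℝ) : ℕ → ℕ → ℝ
  | 0, r => if r = n then 1 else 0
  | j + 1, r =>
      (if r = 1 then 0 else Vneg n q j (r - 1)) -
        (if r = 1 then 1 else q (r - 1)) / q n * Vneg n q j n

/-- Benenti potential `V_i^{(k)}(q)` for `k : ℤ`, `i` 1-based. -/
def benenti (n : ℕ) (q : ℕ → ℝ) (k : ℤ) (i : ℕ) : ℝ :=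
  if 0 ≤ k then Vpos n q k.toNat i else Vneg n q (-k).toNat i

/-- Reindex a vector of `ℝ^n` as a 1-based `ℕ`-indexed family (zero outside `1..n`). -/
def extQ (n : ℕ) (Q : Fin n → ℝ) : ℕ → ℝ := fun a =>
  if h : 1 ≤ a ∧ a ≤ n then Q ⟨a - 1, by omega⟩ else 0

/-- The Stäckel Lagrangian `L^{n,m,k}(q,q_x) = ¼ ∑_{i,j} V_1^{(2n-m-i-j)}(q) q_{i,x} q_{j,x}
- (ε/4) V_1^{(k)}(q)` (indices 1-based). -/
def Lag (n : ℕ) (m k : ℤ) (ε : ℝ) (Q Qx : Fin n → ℝ) : ℝ :=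
  (1 / 4) * ∑ i : Fin n, ∑ j : Fin n,
      benenti n (extQ n Q) (2 * (n : ℤ) - m - (((i : ℕ) : ℤ) + 1) - (((j : ℕ) : ℤ) + 1)) 1 *
        Qx i * Qx j -
    ε / 4 * benenti n (extQ n Q) k 1

/-- Euler–Lagrange expression `E_i(L)[c](x) = (∂L/∂q_i)(c x, c_x x) - d/dx [(∂L/∂q_{i,x})(c x, c_x x)]`
along a curve `c : ℝ → ℝⁿ`. -/
def EL (n : ℕ) (L : (Fin n → ℝ) → (Fin n → ℝ) → ℝ) (c : ℝ → Fin n → ℝ) (i : Fin n)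
    (x : ℝ) : ℝ :=
  fderiv ℝ (fun Q => L Q (deriv c x)) (c x) (Pi.single i 1) -
    deriv (fun y => fderiv ℝ (fun V => L (c y) V) (deriv c y) (Pi.single i 1)) x

/-!
Counting `q_l` with weight `l`, the potential `V_j^{(k)}` has weight `k + j - n`: it equals `δ_{j+k,n}`
for `k < n`, involves only the `q_l` with `l ≤ k + j - n`, and its `q_i`-derivative involves only the
`q_l` with `l ≤ k + j - n - i` (and vanishes when `k + j < n + i`). For `L^{n,-N,0}` the potential term
`V_1^{(0)}` is constant, so with `j = n + N + 1 - i` every term of `∂L/∂q_i` involves only `q_l, q_{l,x}`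
with `l < j`. So does the momentum `∂L/∂q_{i,x} = ½ ∑_a V_1^{(2n+N-a-i)} q_{a,x}`, except for the term
`a = j`, which is `½ q_{j,x}` since `V_1^{(n-1)} = 1`; the terms `a > j` vanish.
-/

section Benenti

variable {n : ℕ}

theorem Vpos_of_lt (q : ℕ → ℝ) {k : ℕ} (hk : k < n) (i : ℕ) :
    Vpos n q k i = if i + k = n then 1 else 0 := by
  induction k generalizing i with
  | zero => simp [Vpos]
  | succ k ih =>
    have hk1 : 1 + k ≠ n := by omega
    rw [Vpos, ih (by omega), ih (by omega), if_neg hk1, mul_zero, sub_zero]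
    split_ifs <;> first | rfl | omega

theorem Vpos_congr {q q' : ℕ → ℝ} {k i : ℕ} (h : ∀ l, l + n ≤ k + i → q l = q' l) :
    Vpos n q k i = Vpos n q' k i := by
  induction k generalizing i with
  | zero => rfl
  | succ k ih =>
    rw [Vpos, Vpos, ih fun l hl => h l (by omega)]
    congr 1
    by_cases hk : k + 1 < n
    · have hk1 : 1 + k ≠ n := by omega
      simp [Vpos_of_lt _ (Nat.lt_of_succ_lt hk), hk1]
    · rw [h i (by omega), ih fun l hl => h l (by omega)]

theorem extQ_congr {Q Q' : Fin n → ℝ} {l : ℕ} (h : ∀ a : Fin n, a + 1 = l → Q a = Q' a) :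
    extQ n Q l = extQ n Q' l := by
  unfold extQ
  split_ifs with hl
  · exact h _ (Nat.sub_add_cancel hl.1)
  · rfl

/-- `V_j^{(k)}` as a function of `(q_1, …, q_n)`. -/
def VposFin (n k j : ℕ) (Q : Fin n → ℝ) : ℝ := Vpos n (extQ n Q) k j

theorem VposFin_congr {k j : ℕ} {Q Q' : Fin n → ℝ}
    (h : ∀ a : Fin n, a + 1 + n ≤ k + j → Q a = Q' a) : VposFin n k j Q = VposFin n k j Q' :=
  Vpos_congr fun _ hl => extQ_congr fun a ha => h a (by omega)

theorem VposFin_of_lt {k : ℕ} (hk : k < n) (j : ℕ) (Q : Fin n → ℝ) :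
    VposFin n k j Q = if j + k = n then 1 else 0 :=
  Vpos_of_lt _ hk j

theorem VposFin_zero (j : ℕ) : VposFin n 0 j = fun _ => if j = n then 1 else 0 :=
  rfl

theorem VposFin_succ (k j : ℕ) :
    VposFin n (k + 1) j =
      fun Q => (if j = n then 0 else VposFin n k (j + 1) Q) - extQ n Q j * VposFin n k 1 Q :=
  rfl

@[fun_prop]
theorem differentiable_extQ (j : ℕ) : Differentiable ℝ fun Q : Fin n → ℝ => extQ n Q j := by
  unfold extQ
  split_ifs
  · exact differentiable_apply _
  · exact differentiable_const _

theorem fderiv_extQ_single (j : ℕ) (ι : Fin n) (Q : Fin n → ℝ) :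
    fderiv ℝ (fun Q => extQ n Q j) Q (Pi.single ι 1) = if j = ι + 1 then 1 else 0 := by
  unfold extQ
  by_cases h : 1 ≤ j ∧ j ≤ n
  · have hι : (⟨j - 1, by omega⟩ : Fin n) = ι ↔ j = ι + 1 := by
      rw [Fin.ext_iff, Fin.val_mk]
      omega
    simp only [dif_pos h]
    rw [(hasFDerivAt_apply _ Q).fderiv, ContinuousLinearMap.proj_apply, Pi.single_apply]
    exact if_congr hι rfl rfl
  · simp only [dif_neg h]
    rw [fderiv_fun_const, Pi.zero_apply, zero_apply, if_neg (by omega)]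

@[fun_prop]
theorem differentiable_VposFin (k j : ℕ) : Differentiable ℝ (VposFin n k j) := by
  induction k generalizing j with
  | zero => exact differentiable_const _
  | succ k ih =>
    rw [VposFin_succ]
    split_ifs <;> fun_prop

theorem fderiv_VposFin_succ (k j : ℕ) (ι : Fin n) (Q : Fin n → ℝ) :
    fderiv ℝ (VposFin n (k + 1) j) Q (Pi.single ι 1) =
      (if j = n then 0 else fderiv ℝ (VposFin n k (j + 1)) Q (Pi.single ι 1)) -
        ((if j = ι + 1 then 1 else 0) * VposFin n k 1 Q +
          extQ n Q j * fderiv ℝ (VposFin n k 1) Q (Pi.single ι 1)) := by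
  rw [VposFin_succ, fderiv_fun_sub (by split_ifs <;> fun_prop) (by fun_prop),
    fderiv_fun_mul (by fun_prop) (by fun_prop)]
  by_cases hj : j = n <;>
    simp only [hj, ↓reduceIte, fderiv_fun_const, Pi.zero_apply, zero_apply, sub_apply, add_apply, smul_apply,
      smul_eq_mul, fderiv_extQ_single] <;>
    split_ifs <;> ring

theorem fderiv_VposFin_eq_zero {k j : ℕ} {ι : Fin n} (h : k + j < n + ι + 1) (Q : Fin n → ℝ) :
    fderiv ℝ (VposFin n k j) Q (Pi.single ι 1) = 0 := by
  have := ι.isLt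
  induction k generalizing j with
  | zero => simp [VposFin_zero]
  | succ k ih =>
    rw [fderiv_VposFin_succ, ih (j := j + 1) (by omega), ih (j := 1) (by omega)]
    by_cases hj : j = ι + 1
    · simp [hj, VposFin_of_lt (show k < n by omega), show 1 + k ≠ n by omega]
    · simp [hj]

theorem fderiv_VposFin_congr {k j : ℕ} {ι : Fin n} {Q Q' : Fin n → ℝ}
    (h : ∀ a : Fin n, a + 1 + n + (ι + 1) ≤ k + j → Q a = Q' a) :
    fderiv ℝ (VposFin n k j) Q (Pi.single ι 1) = fderiv ℝ (VposFin n k j) Q' (Pi.single ι 1) := by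
  induction k generalizing j with
  | zero => simp [VposFin_zero]
  | succ k ih =>
    rw [fderiv_VposFin_succ, fderiv_VposFin_succ, ih (j := j + 1) fun a ha => h a (by omega)]
    congr 2
    · by_cases hj : j = ι + 1
      · rw [VposFin_congr (k := k) (j := 1) fun a ha => h a (by omega)]
      · simp [hj]
    · by_cases hk : k + 1 < n + ι + 1
      · simp [fderiv_VposFin_eq_zero hk]
      · rw [extQ_congr (l := j) fun a ha => h a (by omega),
          ih (j := 1) fun a ha => h a (by omega)]

end Benenti

section Quadratic

variable {n : ℕ}

theorem fderiv_quadratic_coeff {E : Type*} [NormedAddCommGroup E] [NormedSpace ℝ E]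
    {g : Fin n → Fin n → E → ℝ} {Q : E} (hg : ∀ a b, DifferentiableAt ℝ (g a b) Q)
    (V : Fin n → ℝ) (w : E) :
    fderiv ℝ (fun Q => ∑ a, ∑ b, g a b Q * V a * V b) Q w =
      ∑ a, ∑ b, fderiv ℝ (g a b) Q w * V a * V b := by
  rw [fderiv_fun_sum fun a _ => by fun_prop, sum_apply]
  refine Finset.sum_congr rfl fun a _ => ?_
  rw [fderiv_fun_sum fun b _ => by fun_prop, sum_apply]
  refine Finset.sum_congr rfl fun b _ => ?_
  rw [fderiv_mul_const (by fun_prop), fderiv_mul_const (hg a b)]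
  simp only [smul_apply, smul_eq_mul]
  ring

theorem fderiv_quadratic_single (c : Fin n → Fin n → ℝ) (hc : ∀ a b, c a b = c b a)
    (V : Fin n → ℝ) (ι : Fin n) :
    fderiv ℝ (fun V : Fin n → ℝ => ∑ a, ∑ b, c a b * V a * V b) V (Pi.single ι 1) =
      2 * ∑ a, c a ι * V a := by
  have hproj (a : Fin n) : fderiv ℝ (fun V : Fin n → ℝ => V a) V = ContinuousLinearMap.proj a :=
    (hasFDerivAt_apply a V).fderiv
  have hV (a : Fin n) : DifferentiableAt ℝ (fun V : Fin n → ℝ => V a) V := by fun_prop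
  rw [fderiv_fun_sum fun a _ => by fun_prop, sum_apply]
  conv_lhs => enter [2, a]; rw [fderiv_fun_sum fun b _ => by fun_prop, sum_apply]
  simp [fderiv_fun_mul, hV, hproj, Pi.single_apply, Finset.sum_add_distrib, hc _ ι, mul_comm (V _),
    two_mul]

end Quadratic

section Lagrangian

variable {n : ℕ} (N : ℕ) (ε : ℝ)

/-- The superscript `2n + N - a - b` of the kinetic coefficient, for 1-based indices `a, b`. -/
def kineticIndex (a b : Fin n) : ℕ := 2 * n + N - (a + 1) - (b + 1)

theorem kineticIndex_comm (a b : Fin n) : kineticIndex N a b = kineticIndex N b a := by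
  unfold kineticIndex
  omega

theorem Lag_neg_zero_eq (Q V : Fin n → ℝ) :
    Lag n (-(N : ℤ)) 0 ε Q V =
      (1 / 4) * ∑ a, ∑ b, VposFin n (kineticIndex N a b) 1 Q * V a * V b -
        ε / 4 * (if 1 = n then 1 else 0) := by
  have hkin (a b : Fin n) : 2 * (n : ℤ) - -(N : ℤ) - ((a : ℕ) + 1) - ((b : ℕ) + 1) =
      (kineticIndex N a b : ℤ) := by
    unfold kineticIndex
    omega
  simp only [Lag, benenti, hkin, Nat.cast_nonneg, if_true, Int.toNat_natCast, le_refl]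
  rfl

theorem fderiv_Lag_fst (V Q w : Fin n → ℝ) :
    fderiv ℝ (fun Q => Lag n (-(N : ℤ)) 0 ε Q V) Q w =
      (1 / 4) * ∑ a, ∑ b, fderiv ℝ (VposFin n (kineticIndex N a b) 1) Q w * V a * V b := by
  simp only [Lag_neg_zero_eq]
  rw [fderiv_sub_const, fderiv_const_mul (by fun_prop), smul_apply,
    smul_eq_mul, fderiv_quadratic_coeff fun a b => by fun_prop]

theorem fderiv_Lag_snd (Q V : Fin n → ℝ) (ι : Fin n) :
    fderiv ℝ (fun V => Lag n (-(N : ℤ)) 0 ε Q V) V (Pi.single ι 1) =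
      (1 / 2) * ∑ a, VposFin n (kineticIndex N a ι) 1 Q * V a := by
  simp only [Lag_neg_zero_eq]
  rw [fderiv_sub_const, fderiv_const_mul (by fun_prop), smul_apply,
    smul_eq_mul, fderiv_quadratic_single _ fun a b => by rw [kineticIndex_comm], ← mul_assoc]
  norm_num

/-- The momentum `∂L/∂q_{ι,x}` minus its term `½ q_{j,x}`, when `j + ι + 1 = n + N`. -/
def lowerMomentum (ι j : Fin n) (Q V : Fin n → ℝ) : ℝ :=
  (1 / 2) * ∑ a with a < j, VposFin n (kineticIndex N a ι) 1 Q * V a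

end Lagrangian

section Momentum

variable {n : ℕ} {N : ℕ} {ι j : Fin n}

theorem fderiv_Lag_snd_eq_lowerMomentum (hj : (j : ℕ) + ι + 1 = n + N) (ε : ℝ)
    (Q V : Fin n → ℝ) :
    fderiv ℝ (fun V => Lag n (-(N : ℤ)) 0 ε Q V) V (Pi.single ι 1) =
      lowerMomentum N ι j Q V + (1 / 2) * V j := by
  rw [fderiv_Lag_snd, lowerMomentum, ← mul_add,
    ← Finset.sum_filter_add_sum_filter_not Finset.univ (· < j)]
  congr 2
  rw [Finset.sum_eq_single j]
  · rw [VposFin_of_lt (by unfold kineticIndex; omega), if_pos (by unfold kineticIndex; omega),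
      one_mul]
  · intro a ha hne
    have hja : j < a := lt_of_le_of_ne (not_lt.1 (Finset.mem_filter.1 ha).2) (Ne.symm hne)
    rw [VposFin_of_lt (by unfold kineticIndex; omega), if_neg (by unfold kineticIndex; omega),
      zero_mul]
  · simp

theorem lowerMomentum_congr (hj : (j : ℕ) + ι + 1 = n + N) {Q Q' V V' : Fin n → ℝ}
    (hQ : ∀ a < j, Q a = Q' a) (hV : ∀ a < j, V a = V' a) :
    lowerMomentum N ι j Q V = lowerMomentum N ι j Q' V' := by
  unfold lowerMomentum
  congr 1
  refine Finset.sum_congr rfl fun a ha => ?_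
  have haj : a < j := (Finset.mem_filter.1 ha).2
  rw [hV a haj, VposFin_congr fun l hl => hQ l ?_]
  unfold kineticIndex at hl
  omega

theorem fderiv_Lag_fst_congr (hj : (j : ℕ) + ι + 1 = n + N) (ε : ℝ) {Q Q' V V' : Fin n → ℝ}
    (hQ : ∀ a < j, Q a = Q' a) (hV : ∀ a < j, V a = V' a) :
    fderiv ℝ (fun Q => Lag n (-(N : ℤ)) 0 ε Q V) Q (Pi.single ι 1) =
      fderiv ℝ (fun Q => Lag n (-(N : ℤ)) 0 ε Q V') Q' (Pi.single ι 1) := by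
  rw [fderiv_Lag_fst, fderiv_Lag_fst]
  congr 1
  refine Finset.sum_congr rfl fun a _ => Finset.sum_congr rfl fun b _ => ?_
  by_cases hk : kineticIndex N a b + 1 < n + ι + 1
  · simp [fderiv_VposFin_eq_zero hk]
  · unfold kineticIndex at hk
    rw [hV a (by omega), hV b (by omega),
      fderiv_VposFin_congr fun l hl => hQ l (by unfold kineticIndex at hl; omega)]

end Momentum

section Curves

variable {n : ℕ}

theorem deriv_apply_eq {c : ℝ → Fin n → ℝ} {y : ℝ} (hc : DifferentiableAt ℝ c y) (a : Fin n) :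
    deriv c y a = deriv (fun z => c z a) y :=
  (hasDerivAt_pi.1 hc.hasDerivAt a).deriv.symm

theorem EL_Lag_add_half_deriv_deriv {N : ℕ} {ι j : Fin n} (hj : (j : ℕ) + ι + 1 = n + N)
    (ε : ℝ) {c : ℝ → Fin n → ℝ} (hc : ContDiff ℝ 2 c) (x : ℝ) :
    EL n (Lag n (-(N : ℤ)) 0 ε) c ι x + (1 / 2) * deriv (deriv fun y => c y j) x =
      fderiv ℝ (fun Q => Lag n (-(N : ℤ)) 0 ε Q (deriv c x)) (c x) (Pi.single ι 1) -
        deriv (fun y => lowerMomentum N ι j (c y) (deriv c y)) x := by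
  have hc1 : Differentiable ℝ c := hc.differentiable (by norm_num)
  have hc2 : Differentiable ℝ (deriv c) := hc.differentiable_deriv_two
  have hlower : DifferentiableAt ℝ (fun y => lowerMomentum N ι j (c y) (deriv c y)) x := by
    unfold lowerMomentum
    fun_prop
  have hcj : deriv (fun y => c y j) = fun y => deriv c y j :=
    funext fun y => (deriv_apply_eq (hc1 y) j).symm
  have hmomentum : (fun y => fderiv ℝ (fun V => Lag n (-(N : ℤ)) 0 ε (c y) V) (deriv c y)
      (Pi.single ι 1)) = fun y => lowerMomentum N ι j (c y) (deriv c y) + (1 / 2) * deriv c y j :=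
    funext fun y => fderiv_Lag_snd_eq_lowerMomentum hj ε _ _
  rw [EL, hmomentum, deriv_fun_add hlower (by fun_prop), deriv_const_mul _ (by fun_prop), hcj]
  ring

end Curves

theorem euler_lagrange_depends_on_lower_components (n N : ℕ)
    (i : ℕ) (hi1 : N + 1 ≤ i) (hi2 : i ≤ n)
    (q q' : ℝ → Fin n → ℝ) (hq : ContDiff ℝ (⊤ : ℕ∞) q) (hq' : ContDiff ℝ (⊤ : ℕ∞) q')
    (hagree : ∀ l : ℕ, (hl1 : 1 ≤ l) → (hl2 : l ≤ n + N - i) → ∀ x : ℝ,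
      q x ⟨l - 1, by omega⟩ = q' x ⟨l - 1, by omega⟩) :
    ∀ x : ℝ,
      EL n (Lag n (-(N : ℤ)) 0 1) q ⟨i - 1, by omega⟩ x +
          (1 / 2) * deriv (deriv (fun y => q y ⟨n + N - i, by omega⟩)) x =
        EL n (Lag n (-(N : ℤ)) 0 1) q' ⟨i - 1, by omega⟩ x +
          (1 / 2) * deriv (deriv (fun y => q' y ⟨n + N - i, by omega⟩)) x := by
  intro x
  set ι : Fin n := ⟨i - 1, by omega⟩
  set j : Fin n := ⟨n + N - i, by omega⟩
  have hj : (j : ℕ) + ι + 1 = n + N := by simp only [j, ι]; omega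
  have hq2 : ContDiff ℝ 2 q := hq.of_le (WithTop.coe_le_coe.2 le_top)
  have hq2' : ContDiff ℝ 2 q' := hq'.of_le (WithTop.coe_le_coe.2 le_top)
  have hlow (y : ℝ) (a : Fin n) (ha : a < j) : q y a = q' y a := by
    have ha' : (a : ℕ) < n + N - i := ha
    simpa using hagree (a + 1) (by omega) (by omega) y
  have hlow' (y : ℝ) (a : Fin n) (ha : a < j) : deriv q y a = deriv q' y a := by
    rw [deriv_apply_eq ((hq2.differentiable (by norm_num)) y),
      deriv_apply_eq ((hq2'.differentiable (by norm_num)) y)]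
    exact congrArg (deriv · y) (funext fun z => hlow z a ha)
  rw [EL_Lag_add_half_deriv_deriv hj _ hq2, EL_Lag_add_half_deriv_deriv hj _ hq2',
    fderiv_Lag_fst_congr hj _ (hlow x) (hlow' x),
    funext fun y => lowerMomentum_congr hj (hlow y) (hlow' y)]
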